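/- Let μ be the product distribution on {0,1}^n with marginals p_i, and let C be an extremal set of constraints with μ(all constraints satisfied) > 0. Then the partial rejection sampling algorithm terminates with probability 1, and its output distribution is exactly μ conditioned on all constraints being satisfied. -/

import Mathlib

/-!
Resampling the variables of a set `R` is reversible for the product measure `ν`. For an extremal
system this makes the product form invariant: if the state is distributed as `ν` reweighted by a
function of its violated set, then one more round (on the runs that have not stopped) yields a
state `y` with weight `ν y` times `∑ₛ ν(every constraint of S violated) · (old factor of S)`,
the sum running over the nonempty `S` whose variables meet every constraint violated by `y`:
by extremality these are exactly the violated sets from which `y` can be reached. Hence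
`Pr[running at round t, state x] = β_t(violated x) · ν x` with `β_t` maximal at `∅`, so a running
round stops with probability at least `Z = ν(all constraints hold)`, the running probability
decays geometrically, and the output at every round is proportional to `ν` on satisfying states.
-/

open scoped Classical
open Filter

/-- The set of variables appearing in some constraint violated by `x`. -/
noncomputable def resampleSet {n L : ℕ} (c : Fin L → (Fin n → Bool) → Bool)
    (var : Fin L → Finset (Fin n)) (x : Fin n → Bool) : Finset (Fin n) :=
  Finset.univ.filter (fun i => ∃ j, c j x = false ∧ i ∈ var j)

/-- The state of the partial rejection sampling algorithm at round `t`, driven by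
the random tape `u`. -/
noncomputable def stateAt {n L : ℕ} (c : Fin L → (Fin n → Bool) → Bool)
    (var : Fin L → Finset (Fin n)) (u : ℕ → (Fin n → Bool)) : ℕ → (Fin n → Bool)
  | 0 => u 0
  | t + 1 => fun i =>
      if i ∈ resampleSet c var (stateAt c var u t) then u (t + 1) i
      else stateAt c var u t i

/-- Extend a finite tape prefix to an infinite tape (arbitrarily beyond). -/
def extTape {n t : ℕ} (w : Fin (t + 1) → (Fin n → Bool)) : ℕ → (Fin n → Bool) :=
  fun s => if h : s < t + 1 then w ⟨s, h⟩ else fun _ => false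

/-- Probability of a finite tape prefix under independent marginals `p`. -/
noncomputable def tapeProb {n t : ℕ} (p : Fin n → ℝ)
    (w : Fin (t + 1) → (Fin n → Bool)) : ℝ :=
  ∏ s, ∏ i, (if w s i then p i else 1 - p i)

open Finset

namespace PartialRejectionSampling

section ProductMeasure

variable {ι : Type*} (p : ι → ℝ)

noncomputable def weight (i : ι) (b : Bool) : ℝ := if b then p i else 1 - p i

lemma sum_weight (i : ι) : ∑ b, weight p i b = 1 := by simp [weight]

variable {p} in
lemma weight_nonneg (hp : ∀ i, 0 ≤ p i ∧ p i ≤ 1) (i : ι) (b : Bool) : 0 ≤ weight p i b := by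
  cases b
  · exact sub_nonneg.mpr (hp i).2
  · exact (hp i).1

variable [Fintype ι]

noncomputable def productWeight (x : ι → Bool) : ℝ := ∏ i, weight p i (x i)

noncomputable def resampleKernel (R : Finset ι) (x y : ι → Bool) : ℝ :=
  ∏ i, if i ∈ R then weight p i (y i) else if x i = y i then 1 else 0

variable {p} in
lemma productWeight_nonneg (hp : ∀ i, 0 ≤ p i ∧ p i ≤ 1) (x : ι → Bool) :
    0 ≤ productWeight p x :=
  prod_nonneg fun i _ => weight_nonneg hp i (x i)

variable [DecidableEq ι]

lemma sum_productWeight : ∑ x, productWeight p x = 1 := by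
  simp only [productWeight, ← Fintype.prod_sum, sum_weight, prod_const_one]

lemma sum_productWeight_mul_ite_piecewise_eq (R : Finset ι) (x y : ι → Bool) :
    ∑ z, productWeight p z * (if R.piecewise z x = y then 1 else 0) = resampleKernel p R x y := by
  have hcoord : ∀ z : ι → Bool, productWeight p z * (if R.piecewise z x = y then 1 else 0)
      = ∏ i, weight p i (z i) * if (if i ∈ R then z i else x i) = y i then 1 else 0 := by
    intro z
    rw [prod_mul_distrib, productWeight, prod_boole]
    simp [funext_iff, Finset.piecewise]
  simp only [hcoord, resampleKernel]
  rw [← Fintype.prod_sum fun i b =>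
    weight p i b * if (if i ∈ R then b else x i) = y i then 1 else 0]
  refine prod_congr rfl fun i _ => ?_
  split_ifs with hi
  · simp
  · rw [← sum_mul, sum_weight, one_mul]
  · simp

lemma sum_resampleKernel_mul (R : Finset ι) (x : ι → Bool) (f : (ι → Bool) → ℝ) :
    ∑ y, resampleKernel p R x y * f y = ∑ z, productWeight p z * f (R.piecewise z x) := by
  simp only [← sum_productWeight_mul_ite_piecewise_eq, sum_mul]
  rw [sum_comm]
  refine sum_congr rfl fun z _ => ?_
  simp

lemma sum_resampleKernel (R : Finset ι) (x : ι → Bool) : ∑ y, resampleKernel p R x y = 1 := by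
  simpa [sum_productWeight] using sum_resampleKernel_mul p R x 1

lemma productWeight_mul_resampleKernel_comm (R : Finset ι) (x y : ι → Bool) :
    productWeight p x * resampleKernel p R x y = productWeight p y * resampleKernel p R y x := by
  simp only [productWeight, resampleKernel, ← prod_mul_distrib]
  refine prod_congr rfl fun i _ => ?_
  split_ifs <;> simp_all [mul_comm]

end ProductMeasure

section Constraints

variable {ι κ : Type*} [Fintype ι] [DecidableEq ι] [Fintype κ] (p : ι → ℝ)
  (c : κ → (ι → Bool) → Bool) (var : κ → Finset ι)

noncomputable def violated (x : ι → Bool) : Finset κ := univ.filter fun j => c j x = false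

def IsExtremal : Prop :=
  ∀ i j, i ≠ j → Disjoint (var i) (var j) ∨ ∀ x, c i x = true ∨ c j x = true

noncomputable def violationProb (S : Finset κ) : ℝ := ∑ x with S ⊆ violated c x, productWeight p x

variable {p c var}

omit [Fintype ι] [DecidableEq ι] in
@[simp]
lemma mem_violated {x : ι → Bool} {j : κ} : j ∈ violated c x ↔ c j x = false := by
  simp [violated]

omit [Fintype ι] [DecidableEq ι] in
lemma violated_nonempty_iff {x : ι → Bool} : (violated c x).Nonempty ↔ ∃ j, c j x = false := by
  simp [violated, filter_nonempty_iff]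

omit [Fintype ι] [DecidableEq ι] in
lemma violated_eq_empty_iff {x : ι → Bool} : violated c x = ∅ ↔ ∀ j, c j x = true := by
  simp [violated, filter_eq_empty_iff]

omit [Fintype ι] [DecidableEq ι] [Fintype κ] in
lemma apply_eq_of_disjoint (hdep : ∀ j, DependsOn (c j) (var j)) {R : Finset ι}
    {x y : ι → Bool} (hxy : ∀ i ∉ R, x i = y i) {j : κ} (hj : Disjoint (var j) R) :
    c j x = c j y :=
  hdep j fun i hi => hxy i (disjoint_left.mp hj hi)

omit [Fintype ι] in
/-- A constraint violated by `x` either meets the variables of `S`, and then extremality forces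
it into `S`, or does not, and then it was already violated by `y`. -/
lemma violated_eq_iff (hdep : ∀ j, DependsOn (c j) (var j)) (hext : IsExtremal c var)
    (hsat : ∃ x₀, ∀ j, c j x₀ = true) {S : Finset κ} {x y : ι → Bool}
    (hxy : ∀ i ∉ S.biUnion var, x i = y i) :
    violated c x = S ↔
      S ⊆ violated c x ∧ ∀ j ∈ violated c y, ¬Disjoint (var j) (S.biUnion var) := by
  constructor
  · rintro rfl
    refine ⟨subset_rfl, fun j hjy hdisj => ?_⟩
    have hjx : j ∈ violated c x := by
      rwa [mem_violated, apply_eq_of_disjoint hdep hxy hdisj, ← mem_violated]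
    have hvar : var j = ∅ :=
      disjoint_self.mp (disjoint_of_subset_right (subset_biUnion_of_mem var hjx) hdisj)
    obtain ⟨x₀, hx₀⟩ := hsat
    have hconst : c j x = c j x₀ := hdep j (by simp [hvar])
    simp [hconst, hx₀] at hjx
  · rintro ⟨hSx, hy⟩
    refine Subset.antisymm (fun j hjx => ?_) hSx
    have hmeet : ¬Disjoint (var j) (S.biUnion var) := fun hdisj =>
      hy j (by rwa [mem_violated, ← apply_eq_of_disjoint hdep hxy hdisj, ← mem_violated]) hdisj
    obtain ⟨i, hij, hiS⟩ := not_disjoint_iff.mp hmeet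
    obtain ⟨j', hj', hij'⟩ := mem_biUnion.mp hiS
    by_contra hjS
    rcases hext j j' (ne_of_mem_of_not_mem hj' hjS).symm with hd | hcompat
    · exact disjoint_left.mp hd hij hij'
    · have hj'x := mem_violated.mp (hSx hj')
      rw [mem_violated] at hjx
      rcases hcompat x with h | h <;> simp [h] at hjx hj'x

omit [Fintype ι] in
lemma subset_violated_piecewise_iff (hdep : ∀ j, DependsOn (c j) (var j)) (S : Finset κ)
    (z y : ι → Bool) : S ⊆ violated c ((S.biUnion var).piecewise z y) ↔ S ⊆ violated c z := by
  have hagree : ∀ j ∈ S, c j ((S.biUnion var).piecewise z y) = c j z := fun j hj =>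
    hdep j fun i hi => piecewise_eq_of_mem _ _ _ (mem_biUnion.mpr ⟨j, hj, hi⟩)
  simp only [subset_iff, mem_violated]
  exact forall₂_congr fun j hj => by rw [hagree j hj]

lemma sum_violated_eq_mul_productWeight (hdep : ∀ j, DependsOn (c j) (var j))
    (hext : IsExtremal c var) (hsat : ∃ x₀, ∀ j, c j x₀ = true) (S : Finset κ) (y : ι → Bool) :
    ∑ x with violated c x = S, productWeight p x * resampleKernel p (S.biUnion var) x y
      = (if ∀ j ∈ violated c y, ¬Disjoint (var j) (S.biUnion var) then violationProb p c S else 0)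
          * productWeight p y := by
  set R := S.biUnion var
  have hfiber : ∀ z, violated c (R.piecewise z y) = S ↔
      (∀ j ∈ violated c y, ¬Disjoint (var j) R) ∧ S ⊆ violated c z := fun z => by
    rw [violated_eq_iff hdep hext hsat (fun i hi => piecewise_eq_of_notMem _ _ _ hi),
      subset_violated_piecewise_iff hdep, and_comm]
  calc ∑ x with violated c x = S, productWeight p x * resampleKernel p R x y
      = productWeight p y * ∑ x, resampleKernel p R y x * if violated c x = S then 1 else 0 := by
        simp only [sum_filter, mul_sum, mul_ite, mul_one, mul_zero,
          productWeight_mul_resampleKernel_comm p R _ y]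
    _ = productWeight p y * ∑ z, productWeight p z *
          if violated c (R.piecewise z y) = S then 1 else 0 := by
        rw [sum_resampleKernel_mul]
    _ = _ := by
        simp only [hfiber, violationProb, sum_filter, ite_and, mul_ite, mul_one, mul_zero]
        split_ifs <;> simp [mul_comm]

end Constraints

section Factor

variable {ι κ : Type*} [Fintype ι] [DecidableEq ι] [Fintype κ] (p : ι → ℝ)
  (c : κ → (ι → Bool) → Bool) (var : κ → Finset ι)

/-- `reachFactor t T` is the density, relative to the product measure, of reaching round `t`
in a state whose violated set is `T`. -/
noncomputable def reachFactor : ℕ → Finset κ → ℝ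
  | 0, _ => 1
  | t + 1, T => ∑ S with S.Nonempty ∧ ∀ j ∈ T, ¬Disjoint (var j) (S.biUnion var),
      violationProb p c S * reachFactor t S

noncomputable def resampleStep (F : (ι → Bool) → ℝ) (y : ι → Bool) : ℝ :=
  ∑ x, if (violated c x).Nonempty then F x * resampleKernel p ((violated c x).biUnion var) x y
    else 0

variable {p c var}

lemma sum_resampleStep (F : (ι → Bool) → ℝ) :
    ∑ y, resampleStep p c var F y = ∑ x, if (violated c x).Nonempty then F x else 0 := by
  simp only [resampleStep]
  rw [sum_comm]
  refine sum_congr rfl fun x _ => ?_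
  split_ifs <;> simp [← mul_sum, sum_resampleKernel]

lemma resampleStep_factor_mul_productWeight (hdep : ∀ j, DependsOn (c j) (var j))
    (hext : IsExtremal c var) (hsat : ∃ x₀, ∀ j, c j x₀ = true) (f : Finset κ → ℝ)
    (y : ι → Bool) :
    resampleStep p c var (fun x => f (violated c x) * productWeight p x) y
      = (∑ S with S.Nonempty ∧ ∀ j ∈ violated c y, ¬Disjoint (var j) (S.biUnion var),
          violationProb p c S * f S) * productWeight p y := by
  simp only [resampleStep, mul_assoc]
  rw [← sum_fiberwise univ (violated c), sum_filter, sum_mul]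
  refine sum_congr rfl fun S _ => ?_
  calc ∑ x with violated c x = S, (if (violated c x).Nonempty then f (violated c x) *
          (productWeight p x * resampleKernel p ((violated c x).biUnion var) x y) else 0)
      = ∑ x with violated c x = S, if S.Nonempty then f S *
          (productWeight p x * resampleKernel p (S.biUnion var) x y) else 0 :=
        sum_congr rfl fun x hx => by rw [(mem_filter.mp hx).2]
    _ = _ := by
        rw [sum_ite_irrel, sum_const_zero, ← mul_sum,
          sum_violated_eq_mul_productWeight hdep hext hsat, ite_and]
        split_ifs <;> ring

lemma sum_resampleStep_factor_mul_productWeight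
    [DecidablePred fun x : ι → Bool => ∀ j, c j x = true] (f : Finset κ → ℝ) :
    ∑ y, resampleStep p c var (fun x => f (violated c x) * productWeight p x) y
      = ∑ x, f (violated c x) * productWeight p x
          - f ∅ * ∑ x with ∀ j, c j x = true, productWeight p x := by
  rw [sum_resampleStep, eq_sub_iff_add_eq, mul_sum, sum_filter, ← sum_add_distrib]
  refine sum_congr rfl fun x _ => ?_
  by_cases h : ∀ j, c j x = true
  · simp [violated_eq_empty_iff.mpr h, h]
  · simp [nonempty_iff_ne_empty, violated_eq_empty_iff, h]

lemma sum_factor_mul_productWeight_le (hp : ∀ i, 0 ≤ p i ∧ p i ≤ 1) {f : Finset κ → ℝ}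
    (hf : ∀ T, f T ≤ f ∅) : ∑ x, f (violated c x) * productWeight p x ≤ f ∅ := by
  calc ∑ x, f (violated c x) * productWeight p x ≤ ∑ x, f ∅ * productWeight p x :=
        sum_le_sum fun x _ => mul_le_mul_of_nonneg_right (hf _) (productWeight_nonneg hp x)
    _ = f ∅ := by rw [← mul_sum, sum_productWeight, mul_one]

lemma violationProb_nonneg (hp : ∀ i, 0 ≤ p i ∧ p i ≤ 1) (S : Finset κ) :
    0 ≤ violationProb p c S :=
  sum_nonneg fun x _ => productWeight_nonneg hp x

lemma reachFactor_nonneg (hp : ∀ i, 0 ≤ p i ∧ p i ≤ 1) :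
    ∀ t T, 0 ≤ reachFactor p c var t T
  | 0, _ => zero_le_one
  | t + 1, _ => sum_nonneg fun S _ =>
      mul_nonneg (violationProb_nonneg hp S) (reachFactor_nonneg hp t S)

lemma reachFactor_le_reachFactor_empty (hp : ∀ i, 0 ≤ p i ∧ p i ≤ 1) :
    ∀ t T, reachFactor p c var t T ≤ reachFactor p c var t ∅
  | 0, _ => le_rfl
  | t + 1, _ => sum_le_sum_of_subset_of_nonneg (fun S => by simp +contextual)
      fun S _ _ => mul_nonneg (violationProb_nonneg hp S) (reachFactor_nonneg hp t S)

lemma eq_reachFactor_mul_productWeight (hdep : ∀ j, DependsOn (c j) (var j))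
    (hext : IsExtremal c var) (hsat : ∃ x₀, ∀ j, c j x₀ = true) {F : ℕ → (ι → Bool) → ℝ}
    (h0 : F 0 = productWeight p) (hstep : ∀ t, F (t + 1) = resampleStep p c var (F t)) :
    ∀ t, F t = fun x => reachFactor p c var t (violated c x) * productWeight p x
  | 0 => by simp [h0, reachFactor]
  | t + 1 => by
      rw [hstep, eq_reachFactor_mul_productWeight hdep hext hsat h0 hstep t]
      funext y
      rw [resampleStep_factor_mul_productWeight hdep hext hsat, reachFactor]

end Factor

section Tapes

variable {n L : ℕ} (p : Fin n → ℝ) (c : Fin L → (Fin n → Bool) → Bool)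
  (var : Fin L → Finset (Fin n))

/-- The probability that the algorithm is still running at the start of round `t` and is then in
state `x`. -/
noncomputable def reachProb (t : ℕ) (x : Fin n → Bool) : ℝ :=
  ∑ w : Fin (t + 1) → (Fin n → Bool),
    tapeProb p w *
      (if ((∀ s : Fin (t + 1), (s : ℕ) < t →
            ∃ j, c j (stateAt c var (extTape w) (s : ℕ)) = false) ∧
          stateAt c var (extTape w) t = x)
        then (1 : ℝ) else 0)

variable {p c var}

lemma reachProb_nonneg (hp : ∀ i, 0 ≤ p i ∧ p i ≤ 1) (t : ℕ) (x : Fin n → Bool) :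
    0 ≤ reachProb p c var t x :=
  sum_nonneg fun w _ => mul_nonneg (prod_nonneg fun s _ => productWeight_nonneg hp (w s))
    (by positivity)

lemma resampleSet_eq_biUnion_violated (x : Fin n → Bool) :
    resampleSet c var x = (violated c x).biUnion var := by
  ext i
  simp [resampleSet]

lemma stateAt_succ (u : ℕ → Fin n → Bool) (t : ℕ) :
    stateAt c var u (t + 1) =
      ((violated c (stateAt c var u t)).biUnion var).piecewise (u (t + 1)) (stateAt c var u t) := by
  rw [stateAt, ← resampleSet_eq_biUnion_violated]
  rfl

lemma stateAt_congr {u u' : ℕ → Fin n → Bool} {t : ℕ} (h : ∀ s ≤ t, u s = u' s) :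
    stateAt c var u t = stateAt c var u' t := by
  induction t with
  | zero => exact h 0 le_rfl
  | succ t ih =>
    rw [stateAt_succ, stateAt_succ, ih fun s hs => h s (hs.trans t.le_succ), h (t + 1) le_rfl]

lemma extTape_snoc_of_le {t : ℕ} (w : Fin (t + 1) → Fin n → Bool) (z : Fin n → Bool) {s : ℕ}
    (hs : s ≤ t) : extTape (Fin.snoc w z) s = extTape w s := by
  simp only [extTape, dif_pos (Nat.lt_succ_of_le hs),
    dif_pos (Nat.lt_succ_of_le (hs.trans t.le_succ))]
  exact Fin.snoc_castSucc (i := ⟨s, Nat.lt_succ_of_le hs⟩) ..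

lemma extTape_snoc_self {t : ℕ} (w : Fin (t + 1) → Fin n → Bool) (z : Fin n → Bool) :
    extTape (Fin.snoc w z) (t + 1) = z := by
  simp only [extTape, dif_pos (Nat.lt_succ_self (t + 1))]
  exact Fin.snoc_last (α := fun _ => Fin n → Bool) ..

lemma stateAt_extTape_snoc_of_le {t : ℕ} (w : Fin (t + 1) → Fin n → Bool) (z : Fin n → Bool)
    {s : ℕ} (hs : s ≤ t) :
    stateAt c var (extTape (Fin.snoc w z)) s = stateAt c var (extTape w) s :=
  stateAt_congr fun _ hr => extTape_snoc_of_le w z (hr.trans hs)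

lemma tapeProb_snoc {t : ℕ} (w : Fin (t + 1) → Fin n → Bool) (z : Fin n → Bool) :
    tapeProb p (Fin.snoc w z) = tapeProb p w * productWeight p z := by
  simp only [tapeProb, Fin.prod_univ_castSucc, Fin.snoc_castSucc, Fin.snoc_last]
  rfl

lemma forall_fin_lt_iff {t : ℕ} {Q : ℕ → Prop} :
    (∀ s : Fin (t + 1), (s : ℕ) < t → Q s) ↔ ∀ s < t, Q s :=
  ⟨fun h s hs => h ⟨s, by omega⟩ hs, fun h s => h s⟩

lemma sum_tapeProb_mul_ite (t : ℕ) (f : (Fin n → Bool) → ℝ) :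
    ∑ w : Fin (t + 1) → (Fin n → Bool), tapeProb p w *
        (if ∀ s < t, ∃ j, c j (stateAt c var (extTape w) s) = false
          then f (stateAt c var (extTape w) t) else 0)
      = ∑ x, reachProb p c var t x * f x := by
  simp only [reachProb, sum_mul]
  rw [sum_comm]
  refine sum_congr rfl fun w _ => ?_
  simp only [forall_fin_lt_iff (Q := fun s => ∃ j, c j (stateAt c var (extTape w) s) = false),
    mul_assoc, ← mul_sum]
  by_cases h : ∀ s < t, ∃ j, c j (stateAt c var (extTape w) s) = false
  · simp [ite_and, if_pos h]
  · simp [ite_and, if_neg h]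

lemma reachProb_zero : reachProb p c var 0 = productWeight p := by
  funext x
  rw [reachProb, ← (Equiv.funUnique (Fin 1) _).symm.sum_comp]
  simp [tapeProb, productWeight, weight, stateAt, extTape]

lemma running_snoc_iff {t : ℕ} (w : Fin (t + 1) → Fin n → Bool) (z y : Fin n → Bool) :
    ((∀ s : Fin (t + 2), (s : ℕ) < t + 1 →
        ∃ j, c j (stateAt c var (extTape (Fin.snoc w z)) s) = false) ∧
      stateAt c var (extTape (Fin.snoc w z)) (t + 1) = y) ↔
    (∀ s < t, ∃ j, c j (stateAt c var (extTape w) s) = false) ∧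
      ((violated c (stateAt c var (extTape w) t)).Nonempty ∧
        ((violated c (stateAt c var (extTape w) t)).biUnion var).piecewise z
          (stateAt c var (extTape w) t) = y) := by
  rw [forall_fin_lt_iff (Q := fun s => ∃ j, c j (stateAt c var (extTape (Fin.snoc w z)) s) = false),
    Nat.forall_lt_succ_right, stateAt_succ, extTape_snoc_self,
    stateAt_extTape_snoc_of_le w z le_rfl, violated_nonempty_iff, and_assoc]
  refine and_congr (forall₂_congr fun s hs => ?_) Iff.rfl
  rw [stateAt_extTape_snoc_of_le w z hs.le]

lemma reachProb_succ (t : ℕ) :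
    reachProb p c var (t + 1) = resampleStep p c var (reachProb p c var t) := by
  funext y
  calc reachProb p c var (t + 1) y
      = ∑ w : Fin (t + 1) → (Fin n → Bool), tapeProb p w *
          if ∀ s < t, ∃ j, c j (stateAt c var (extTape w) s) = false then
            (if (violated c (stateAt c var (extTape w) t)).Nonempty then
              resampleKernel p ((violated c (stateAt c var (extTape w) t)).biUnion var)
                (stateAt c var (extTape w) t) y
            else 0)
          else 0 := by
        have hsnoc : ∀ z (w : Fin (t + 1) → Fin n → Bool),
            Fin.snocEquiv (fun _ => Fin n → Bool) (z, w) = Fin.snoc w z := fun _ _ => rfl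
        rw [reachProb, ← (Fin.snocEquiv _).sum_comp, Fintype.sum_prod_type, sum_comm]
        refine sum_congr rfl fun w _ => ?_
        simp only [hsnoc, tapeProb_snoc, running_snoc_iff, ite_and,
          ← sum_productWeight_mul_ite_piecewise_eq]
        split_ifs <;> simp [mul_sum, mul_ite]
    _ = ∑ x, reachProb p c var t x *
          if (violated c x).Nonempty then resampleKernel p ((violated c x).biUnion var) x y
          else 0 :=
        sum_tapeProb_mul_ite t fun x =>
          if (violated c x).Nonempty then resampleKernel p ((violated c x).biUnion var) x y else 0
    _ = resampleStep p c var (reachProb p c var t) y := by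
        simp only [resampleStep, mul_ite, mul_zero]

lemma sum_tapeProb_running (t : ℕ) :
    ∑ w : Fin (t + 1) → (Fin n → Bool), tapeProb p w *
        (if ∀ s : Fin (t + 1), ∃ j, c j (stateAt c var (extTape w) (s : ℕ)) = false
          then (1 : ℝ) else 0)
      = ∑ y, reachProb p c var (t + 1) y := by
  have hrunning : ∀ w : Fin (t + 1) → Fin n → Bool,
      (∀ s : Fin (t + 1), ∃ j, c j (stateAt c var (extTape w) (s : ℕ)) = false) ↔
        (∀ s < t, ∃ j, c j (stateAt c var (extTape w) s) = false) ∧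
          (violated c (stateAt c var (extTape w) t)).Nonempty := fun w => by
    rw [Fin.forall_iff, violated_nonempty_iff, ← Nat.forall_lt_succ_right]
  calc ∑ w : Fin (t + 1) → (Fin n → Bool), tapeProb p w *
        (if ∀ s : Fin (t + 1), ∃ j, c j (stateAt c var (extTape w) (s : ℕ)) = false
          then (1 : ℝ) else 0)
      = ∑ w : Fin (t + 1) → (Fin n → Bool), tapeProb p w *
          if ∀ s < t, ∃ j, c j (stateAt c var (extTape w) s) = false then
            (if (violated c (stateAt c var (extTape w) t)).Nonempty then 1 else 0)
          else 0 := by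
        simp only [hrunning, ite_and]
    _ = ∑ x, reachProb p c var t x * if (violated c x).Nonempty then 1 else 0 :=
        sum_tapeProb_mul_ite t fun x => if (violated c x).Nonempty then 1 else 0
    _ = ∑ y, reachProb p c var (t + 1) y := by
        simp [reachProb_succ, sum_resampleStep]

end Tapes

lemma tendsto_zero_and_hasSum_of_sub_mul {P b : ℕ → ℝ} {Z : ℝ} (hZ : 0 < Z) (hP0 : P 0 = 1)
    (hP : ∀ t, 0 ≤ P t) (hPb : ∀ t, P t ≤ b t) (hstep : ∀ t, P (t + 1) = P t - b t * Z) :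
    Tendsto P atTop (nhds 0) ∧ HasSum (fun t => b t * Z) 1 := by
  have hdecay : ∀ t, P (t + 1) ≤ (1 - Z) * P t := fun t => by
    nlinarith [hstep t, mul_le_mul_of_nonneg_right (hPb t) hZ.le]
  have hZ1 : 0 ≤ 1 - Z := by nlinarith [hdecay 0, hP 1]
  have hgeom : ∀ t, P t ≤ (1 - Z) ^ t := fun t => by
    induction t with
    | zero => rw [hP0, pow_zero]
    | succ t ih => rw [pow_succ']; exact (hdecay t).trans (mul_le_mul_of_nonneg_left ih hZ1)
  have hlim : Tendsto P atTop (nhds 0) :=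
    squeeze_zero hP hgeom (tendsto_pow_atTop_nhds_zero_of_lt_one hZ1 (by linarith))
  have hpartial : ∀ T, ∑ t ∈ range T, b t * Z = 1 - P T := fun T => by
    induction T with
    | zero => simp [hP0]
    | succ T ih => rw [sum_range_succ, ih, hstep]; ring
  refine ⟨hlim, (hasSum_iff_tendsto_nat_of_nonneg
    (fun t => mul_nonneg ((hP t).trans (hPb t)) hZ.le) 1).mpr ?_⟩
  simpa [hpartial] using tendsto_const_nhds.sub hlim

end PartialRejectionSampling

open PartialRejectionSampling

/-- Guo–Jiang–Liu: for an extremal constraint system whose satisfying set has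
positive product measure, partial rejection sampling terminates with
probability 1 and its output distribution is exactly the product distribution
conditioned on all constraints being satisfied. -/
theorem partial_rejection_sampling_correct (n L : ℕ)
    (p : Fin n → ℝ) (hp : ∀ i, 0 ≤ p i ∧ p i ≤ 1)
    (c : Fin L → (Fin n → Bool) → Bool) (var : Fin L → Finset (Fin n))
    (hdep : ∀ j (x y : Fin n → Bool), (∀ i ∈ var j, x i = y i) → c j x = c j y)
    (hextremal : ∀ i j, i ≠ j →
      var i ∩ var j = ∅ ∨ ∀ x : Fin n → Bool, c i x = true ∨ c j x = true)
    (μ : (Fin n → Bool) → ℝ)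
    (hμ : ∀ x, μ x = ∏ i, (if x i then p i else 1 - p i))
    (hqpos : 0 < ∑ x ∈ Finset.univ.filter
      (fun x : Fin n → Bool => ∀ j, c j x = true), μ x) :
    Tendsto (fun t : ℕ => ∑ w : Fin (t + 1) → (Fin n → Bool),
        tapeProb p w *
          (if ∀ s : Fin (t + 1), ∃ j,
              c j (stateAt c var (extTape w) (s : ℕ)) = false
            then (1 : ℝ) else 0))
      atTop (nhds 0) ∧
    ∀ x : Fin n → Bool, (∀ j, c j x = true) →
      (∑' t : ℕ, ∑ w : Fin (t + 1) → (Fin n → Bool),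
        tapeProb p w *
          (if ((∀ s : Fin (t + 1), (s : ℕ) < t →
                ∃ j, c j (stateAt c var (extTape w) (s : ℕ)) = false) ∧
              stateAt c var (extTape w) t = x)
            then (1 : ℝ) else 0))
      = μ x / ∑ x' ∈ Finset.univ.filter
          (fun x' : Fin n → Bool => ∀ j, c j x' = true), μ x' := by
  obtain rfl : μ = productWeight p := funext hμ
  set Z := ∑ x ∈ Finset.univ.filter (fun x : Fin n → Bool => ∀ j, c j x = true), productWeight p x
  have hext : IsExtremal c var := fun i j hij =>
    (hextremal i j hij).imp_left disjoint_iff_inter_eq_empty.mpr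
  have hsat : ∃ x₀, ∀ j, c j x₀ = true := by
    obtain ⟨x₀, hx₀⟩ := exists_ne_zero_of_sum_ne_zero hqpos.ne'
    exact ⟨x₀, (mem_filter.mp hx₀.1).2⟩
  have hreach := eq_reachFactor_mul_productWeight (fun j _ _ => hdep j _ _) hext hsat
    (reachProb_zero (p := p)) reachProb_succ
  obtain ⟨hlim, hsum⟩ := tendsto_zero_and_hasSum_of_sub_mul
    (P := fun t => ∑ x, reachProb p c var t x) (b := fun t => reachFactor p c var t ∅) hqpos
    (by simp [reachProb_zero, sum_productWeight])
    (fun t => sum_nonneg fun x _ => reachProb_nonneg hp t x)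
    (fun t => by
      rw [hreach]
      exact sum_factor_mul_productWeight_le hp (reachFactor_le_reachFactor_empty hp t))
    (fun t => by simp only [reachProb_succ, hreach, sum_resampleStep_factor_mul_productWeight, Z])
  refine ⟨?_, fun x hx => HasSum.tsum_eq ?_⟩
  · simp only [sum_tapeProb_running]
    exact hlim.comp (tendsto_add_atTop_nat 1)
  have hfactor : ∀ t,
      reachProb p c var t x = reachFactor p c var t ∅ * Z * (productWeight p x / Z) :=
    fun t => by simp only [hreach, violated_eq_empty_iff.mpr hx]; field_simp
  show HasSum (fun t => reachProb p c var t x) _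
  simpa only [hfactor, one_mul] using hsum.mul_right (productWeight p x / Z)
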